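/- Let S be a countable commutative semigroup with dS piecewise syndetic in S for all d ∈ ℕ, and let M ⊆ S be piecewise syndetic. Then M^{l+1} ∩ AP^{l+1} is piecewise syndetic in the semigroup AP^{l+1} = {(a, a+b, ..., a+lb) : a,b ∈ S}. -/

import Mathlib

/-- `Thick B`: every finite set has a translate contained in `B`. -/
def Thick {S : Type*} [AddCommSemigroup S] (B : Set S) : Prop :=
  ∀ F : Finset S, ∃ x : S, ∀ f ∈ F, f + x ∈ B

/-- `PiecewiseSyndetic A`: some finite union of translates `-t+A` is thick. -/
def PiecewiseSyndetic {S : Type*} [AddCommSemigroup S] (A : Set S) : Prop :=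
  ∃ F : Finset S, Thick {s : S | ∃ t ∈ F, t + s ∈ A}

/-- `itAdd n t` is the `(n+1)`-fold sum `t + t + ⋯ + t`. -/
def itAdd {S : Type*} [AddCommSemigroup S] : ℕ → S → S
  | 0, t => t
  | n + 1, t => itAdd n t + t

/-- The subsemigroup `AP^{l+1} = {(a, a+b, …, a+lb) : a, b ∈ S}` of `S^{l+1}`. -/
def APsub (S : Type*) [AddCommSemigroup S] (l : ℕ) :
    AddSubsemigroup (Fin (l + 1) → S) where
  carrier := {f | ∃ a b : S, f 0 = a ∧ ∀ i : Fin l, f i.succ = f i.castSucc + b}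
  add_mem' := by
    rintro f g ⟨a, b, hf0, hf⟩ ⟨a', b', hg0, hg⟩
    refine ⟨a + a', b + b', by simp [hf0, hg0], fun i => ?_⟩
    simp only [Pi.add_apply, hf i, hg i]
    exact add_add_add_comm _ _ _ _

/-!
Work in the Stone–Čech compactification `βS` (ultrafilters on `S`, with the addition that is
continuous in the left argument). `M` is piecewise syndetic iff it belongs to some `p` in a
minimal left ideal `L` of `βS`. Every member of such a `p` contains arithmetic progressions of
every length (van der Waerden, applied through a syndetic set of translates), so some ultrafilter
`q₀` on `AP^{l+1}` projects to `p` in every coordinate. The projections give a continuous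
homomorphism `Φ : β(AP^{l+1}) → (βS)^{l+1}`. The diagonal point `(p, …, p)` lies in the
minimal left ideal `L^{l+1}` of `(βS)^{l+1}`, hence in a minimal left ideal of the closed
subsemigroup `range Φ`, and this lifts to a point `q` of a minimal left ideal of `β(AP^{l+1})`
with `Φ q = (p, …, p)`. Then `M^{l+1} ∩ AP^{l+1} ∈ q`, so it is piecewise syndetic.
-/

open Filter Set

attribute [local instance] Ultrafilter.add Ultrafilter.addSemigroup

section LeftIdeal

variable {C : Type*} [AddSemigroup C] [TopologicalSpace C]

structure IsClosedLeftIdealIn (V L : Set C) : Prop where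
  nonempty : L.Nonempty
  isClosed : IsClosed L
  subset : L ⊆ V
  add_mem : ∀ v ∈ V, ∀ x ∈ L, v + x ∈ L

/-- In a compact right topological semigroup the minimal closed left ideals are exactly the
minimal left ideals, because every `V + x` is closed. -/
def IsMinimalLeftIdealIn (V L : Set C) : Prop :=
  Minimal (IsClosedLeftIdealIn V) L

theorem isClosedLeftIdealIn_image_add [CompactSpace C] [T2Space C] {V : Set C}
    (hV : IsClosed V) (hVadd : ∀ x ∈ V, ∀ y ∈ V, x + y ∈ V) {x : C} (hx : x ∈ V)
    (hcont : Continuous (· + x)) :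
    IsClosedLeftIdealIn V ((· + x) '' V) := by
  refine ⟨⟨x + x, x, hx, rfl⟩, (hV.isCompact.image hcont).isClosed, ?_, ?_⟩
  · rintro _ ⟨v, hv, rfl⟩
    exact hVadd v hv x hx
  · rintro w hw _ ⟨v, hv, rfl⟩
    exact ⟨w + v, hVadd w hw v hv, add_assoc w v x⟩

theorem exists_isMinimalLeftIdealIn_subset [CompactSpace C] {V J : Set C}
    (hJ : IsClosedLeftIdealIn V J) : ∃ L ⊆ J, IsMinimalLeftIdealIn V L := by
  refine zorn_superset_nonempty {L | IsClosedLeftIdealIn V L} ?_ J hJ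
  intro c hc hchain ⟨L₀, hL₀⟩
  have : Nonempty c := ⟨⟨L₀, hL₀⟩⟩
  refine ⟨⋂₀ c, ⟨?_, isClosed_sInter fun L hL => (hc hL).isClosed,
    (sInter_subset_of_mem hL₀).trans (hc hL₀).subset,
    fun v hv x hx => mem_sInter.2 fun L hL => (hc hL).add_mem v hv x (mem_sInter.1 hx L hL)⟩,
    fun L hL => sInter_subset_of_mem hL⟩
  exact IsCompact.nonempty_sInter_of_directed_nonempty_isCompact_isClosed
    (IsChain.directedOn (r := fun a b : Set C => a ⊇ b) hchain.symm)
    (fun L hL => (hc hL).nonempty) (fun L hL => (hc hL).isClosed.isCompact)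
    fun L hL => (hc hL).isClosed

namespace IsMinimalLeftIdealIn

variable [CompactSpace C]

theorem image_add_eq [T2Space C] {V L : Set C} (hV : IsClosed V)
    (hVadd : ∀ x ∈ V, ∀ y ∈ V, x + y ∈ V) (hL : IsMinimalLeftIdealIn V L) {x : C} (hx : x ∈ L)
    (hcont : Continuous (· + x)) : (· + x) '' V = L :=
  hL.eq_of_subset (isClosedLeftIdealIn_image_add hV hVadd (hL.prop.subset hx) hcont)
    (by rintro _ ⟨v, hv, rfl⟩; exact hL.prop.add_mem v hv x hx)

theorem range_add_eq [T2Space C] {L : Set C} (hL : IsMinimalLeftIdealIn univ L) {x : C}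
    (hx : x ∈ L) (hcont : Continuous (· + x)) : range (· + x) = L := by
  rw [← image_univ]
  exact hL.image_add_eq isClosed_univ (fun _ _ _ _ => mem_univ _) hx hcont

theorem pi [T2Space C] {I : Type*} (hcont : ∀ r : C, Continuous (· + r)) {L : Set C}
    (hL : IsMinimalLeftIdealIn univ L) :
    IsMinimalLeftIdealIn (univ : Set (I → C)) (univ.pi fun _ => L) := by
  refine ⟨⟨univ_pi_nonempty_iff.2 fun _ => hL.prop.nonempty,
    isClosed_set_pi fun _ _ => hL.prop.isClosed, subset_univ _,
    fun v _ x hx i _ => hL.prop.add_mem (v i) trivial (x i) (hx i trivial)⟩, ?_⟩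
  intro J hJ hJL u hu
  obtain ⟨w, hw⟩ := hJ.nonempty
  have hsum : ∀ i, ∃ d, d + w i = u i := fun i => by
    rw [← mem_range, hL.range_add_eq (hJL hw i trivial) (hcont (w i))]
    exact hu i trivial
  choose d hd using hsum
  exact funext hd ▸ hJ.add_mem d trivial w hw

theorem exists_of_mem [T2Space C] (hcont : ∀ r : C, Continuous (· + r)) {V L : Set C}
    (hV : IsClosed V) (hVadd : ∀ x ∈ V, ∀ y ∈ V, x + y ∈ V) (hL : IsMinimalLeftIdealIn univ L)
    {p : C} (hpV : p ∈ V) (hpL : p ∈ L) : ∃ LV, IsMinimalLeftIdealIn V LV ∧ p ∈ LV := by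
  obtain ⟨LV, hLVp, hLV⟩ :=
    exists_isMinimalLeftIdealIn_subset (isClosedLeftIdealIn_image_add hV hVadd hpV (hcont p))
  obtain ⟨f, hfLV, hff⟩ := exists_idempotent_in_compact_add_subsemigroup hcont LV
    hLV.prop.nonempty hLV.prop.isClosed.isCompact
    fun x hx y hy => hLV.prop.add_mem x (hLV.prop.subset hx) y hy
  have hfL : f ∈ L := by
    obtain ⟨v, -, rfl⟩ := hLVp hfLV
    exact hL.prop.add_mem v trivial p hpL
  -- `p ∈ L = C + f` and `f` is idempotent, so `f` is a right identity for `p`.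
  obtain ⟨w, hw⟩ : p ∈ range (· + f) := (hL.range_add_eq hfL (hcont f)).symm ▸ hpL
  have hpf : p + f = p := by
    rw [← hw]
    exact (add_assoc w f f).trans (congrArg (w + ·) hff)
  exact ⟨LV, hLV, hpf ▸ hLV.prop.add_mem p hpV f hfLV⟩

theorem exists_preimage {C' : Type*} [AddSemigroup C'] [TopologicalSpace C'] [T2Space C']
    (Φ : C →ₙ+ C') (hΦ : Continuous Φ) {LV : Set C'}
    (hLV : IsMinimalLeftIdealIn (range Φ) LV) {v : C'} (hv : v ∈ LV) :
    ∃ LP, IsMinimalLeftIdealIn (univ : Set C) LP ∧ ∃ q ∈ LP, Φ q = v := by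
  obtain ⟨c, hc⟩ := hLV.prop.subset hv
  have hpre : IsClosedLeftIdealIn univ (Φ ⁻¹' LV) := by
    refine ⟨⟨c, show Φ c ∈ LV from hc ▸ hv⟩, hLV.prop.isClosed.preimage hΦ, subset_univ _,
      fun a _ x hx => ?_⟩
    rw [mem_preimage, map_add]
    exact hLV.prop.add_mem _ ⟨a, rfl⟩ _ hx
  obtain ⟨LP, hLPV, hLP⟩ := exists_isMinimalLeftIdealIn_subset hpre
  have himage : Φ '' LP = LV := by
    refine hLV.eq_of_subset ⟨hLP.prop.nonempty.image Φ,
      (hLP.prop.isClosed.isCompact.image hΦ).isClosed, image_subset_range _ _, ?_⟩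
      (image_subset_iff.2 hLPV)
    rintro _ ⟨a, rfl⟩ _ ⟨x, hx, rfl⟩
    exact ⟨a + x, hLP.prop.add_mem a trivial x hx, map_add Φ a x⟩
  obtain ⟨q, hq, rfl⟩ := himage ▸ hv
  exact ⟨LP, hLP, q, hq, rfl⟩

end IsMinimalLeftIdealIn

end LeftIdeal

namespace Ultrafilter

theorem mem_add_iff {G : Type*} [Add G] {U V : Ultrafilter G} {A : Set G} :
    A ∈ U + V ↔ {m | {m' | m + m' ∈ A} ∈ V} ∈ U :=
  Iff.rfl

theorem map_add {G G' : Type*} [Add G] [Add G'] (f : G →ₙ+ G') (U V : Ultrafilter G) :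
    (U + V).map f = U.map f + V.map f := by
  ext A
  simp only [mem_map, mem_add_iff, mem_preimage, _root_.map_add]
  rfl

theorem continuous_map {α β : Type*} (f : α → β) : Continuous (Ultrafilter.map f) :=
  ultrafilterBasis_is_basis.continuous_iff.2 <| forall_mem_range.2 fun s =>
    ultrafilter_isOpen_basic (f ⁻¹' s)

theorem exists_forall_mem {ι α : Type*} {N : ι → Set α}
    (h : ∀ s : Finset ι, (⋂ i ∈ s, N i).Nonempty) : ∃ U : Ultrafilter α, ∀ i, N i ∈ U := by
  classical
  obtain ⟨U, hU⟩ := exists_ultrafilter_of_finite_inter_nonempty (range N) fun T hT => by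
    obtain ⟨s, -, rfl⟩ := Finset.subset_set_image_iff.1 (image_univ (f := N) ▸ hT)
    simpa [sInter_image] using h s
  exact ⟨U, fun i => hU (mem_range_self i)⟩

theorem exists_map_eval_eq {ι α P : Type*} [Finite ι] (e : P → ι → α) {p : Ultrafilter α}
    (h : ∀ A ∈ p, ∃ x, ∀ i, e x i ∈ A) :
    ∃ q : Ultrafilter P, ∀ i, q.map (fun x => e x i) = p := by
  set 𝔉 := Filter.comap e (Filter.pi fun _ => (p : Filter α))
  have : 𝔉.NeBot := by
    refine comap_neBot_iff.2 fun t ht => ?_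
    obtain ⟨I, -, A, hA, hAt⟩ := mem_pi.1 ht
    obtain ⟨x, hx⟩ := h (⋂ i, A i) (iInter_mem.2 hA)
    exact ⟨x, hAt fun i _ => mem_iInter.1 (hx i) i⟩
  refine ⟨.of 𝔉, fun i => coe_le_coe.1 ?_⟩
  exact ((tendsto_eval_pi _ i).comp tendsto_comap).mono_left (of_le _)

end Ultrafilter

theorem IsMinimalLeftIdealIn.exists_lift {ι P S : Type*} [AddSemigroup P] [AddSemigroup S]
    (π : ι → P →ₙ+ S) {L : Set (Ultrafilter S)} (hL : IsMinimalLeftIdealIn univ L)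
    {p : Ultrafilter S} (hp : p ∈ L) {q₀ : Ultrafilter P} (hq₀ : ∀ i, q₀.map (π i) = p) :
    ∃ LP, IsMinimalLeftIdealIn (univ : Set (Ultrafilter P)) LP ∧
      ∃ q ∈ LP, ∀ i, q.map (π i) = p := by
  let Φ : Ultrafilter P →ₙ+ (ι → Ultrafilter S) :=
    { toFun := fun q i => q.map (π i)
      map_add' := fun U V => funext fun i => Ultrafilter.map_add (π i) U V }
  have hΦ : Continuous Φ := continuous_pi fun i => Ultrafilter.continuous_map (π i)
  have hcont : ∀ r : ι → Ultrafilter S, Continuous (· + r) := fun r =>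
    continuous_pi fun i => (Ultrafilter.continuous_add_left (r i)).comp (continuous_apply i)
  have hΦadd : ∀ x ∈ range Φ, ∀ y ∈ range Φ, x + y ∈ range Φ := by
    rintro _ ⟨a, rfl⟩ _ ⟨b, rfl⟩
    exact ⟨a + b, map_add Φ a b⟩
  obtain ⟨LV, hLV, hpLV⟩ := (hL.pi Ultrafilter.continuous_add_left).exists_of_mem hcont
    (isCompact_range hΦ).isClosed hΦadd (p := fun _ => p) ⟨q₀, funext hq₀⟩ fun _ _ => hp
  obtain ⟨LP, hLP, q, hq, hΦq⟩ := hLV.exists_preimage Φ hΦ hpLV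
  exact ⟨LP, hLP, q, hq, congrFun hΦq⟩

def Syndetic {G : Type*} [Add G] (A : Set G) : Prop :=
  ∃ F : Finset G, ∀ y, ∃ t ∈ F, t + y ∈ A

namespace IsMinimalLeftIdealIn

variable {G : Type*}

theorem syndetic_setOf_mem [AddSemigroup G] {L : Set (Ultrafilter G)}
    (hL : IsMinimalLeftIdealIn univ L) {q : Ultrafilter G} (hq : q ∈ L) {A : Set G}
    (hA : A ∈ q) : Syndetic {y | {z | y + z ∈ A} ∈ q} := by
  by_contra hns
  simp only [Syndetic, not_exists, not_forall, not_and] at hns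
  obtain ⟨r, hr⟩ := Ultrafilter.exists_forall_mem
    (N := fun t => {y | {z | t + y + z ∈ A} ∉ q}) fun F => by
      obtain ⟨y, hy⟩ := hns F
      exact ⟨y, mem_iInter₂.2 hy⟩
  have hrq : r + q ∈ L := hL.prop.add_mem r trivial q hq
  obtain ⟨v, hv⟩ : q ∈ range (· + (r + q)) :=
    (hL.range_add_eq hrq (Ultrafilter.continuous_add_left _)).symm ▸ hq
  have hA' : {a | {y | {z | a + y + z ∈ A} ∈ q} ∈ r} ∈ v := by
    change A ∈ v + r + q
    rw [add_assoc, show v + (r + q) = q from hv]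
    exact hA
  obtain ⟨a, ha⟩ := Ultrafilter.nonempty_of_mem hA'
  obtain ⟨y, hy, hy'⟩ := Ultrafilter.nonempty_of_mem (inter_mem ha (hr a))
  exact hy' hy

theorem piecewiseSyndetic_of_mem [AddCommSemigroup G] {L : Set (Ultrafilter G)}
    (hL : IsMinimalLeftIdealIn univ L) {q : Ultrafilter G} (hq : q ∈ L) {A : Set G}
    (hA : A ∈ q) : PiecewiseSyndetic A := by
  obtain ⟨F, hF⟩ := hL.syndetic_setOf_mem hq hA
  choose t ht hAt using hF
  refine ⟨F, fun H => ?_⟩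
  obtain ⟨x, hx⟩ := Ultrafilter.nonempty_of_mem ((biInter_finset_mem H).2 fun h _ => hAt h)
  exact ⟨x, fun h hh => ⟨t h, ht h, by simpa [add_assoc] using mem_iInter₂.1 hx h hh⟩⟩

end IsMinimalLeftIdealIn

theorem PiecewiseSyndetic.exists_mem_isMinimalLeftIdealIn {G : Type*} [AddCommSemigroup G]
    {M : Set G} (hM : PiecewiseSyndetic M) :
    ∃ L, IsMinimalLeftIdealIn (univ : Set (Ultrafilter G)) L ∧ ∃ p ∈ L, M ∈ p := by
  obtain ⟨F, hF⟩ := hM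
  set B := {s | ∃ t ∈ F, t + s ∈ M}
  obtain ⟨u, hu⟩ := Ultrafilter.exists_forall_mem (N := fun f => {x | f + x ∈ B}) fun H => by
    obtain ⟨x, hx⟩ := hF H
    exact ⟨x, mem_iInter₂.2 hx⟩
  obtain ⟨L, hLu, hL⟩ := exists_isMinimalLeftIdealIn_subset <| isClosedLeftIdealIn_image_add
    isClosed_univ (fun _ _ _ _ => mem_univ _) (mem_univ u) (Ultrafilter.continuous_add_left u)
  obtain ⟨r, hr⟩ := hL.prop.nonempty
  have hBr : B ∈ r := by
    obtain ⟨v, -, rfl⟩ := hLu hr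
    change {m | {m' | m + m' ∈ B} ∈ u} ∈ v
    exact mem_of_superset univ_mem fun m _ => hu m
  have hBunion : B = ⋃ t ∈ (F : Set G), {s | t + s ∈ M} := by
    ext s
    simp [B]
  rw [hBunion, Ultrafilter.finite_biUnion_mem_iff F.finite_toSet] at hBr
  obtain ⟨t, -, htM⟩ := hBr
  exact ⟨L, hL, pure t + r, hL.prop.add_mem _ trivial r hr, htM⟩

theorem itAdd_add {S : Type*} [AddCommSemigroup S] (y : S) (m n : ℕ) :
    itAdd (m + n + 1) y = itAdd m y + itAdd n y := by
  induction n with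
  | zero => rfl
  | succ n ih => rw [← add_assoc, itAdd, ih, itAdd, add_assoc]

theorem Syndetic.exists_apsub_forall_mem {S : Type*} [AddCommSemigroup S] {q : Ultrafilter S}
    {A : Set S} (hA : Syndetic {y | {z | y + z ∈ A} ∈ q}) (l : ℕ) :
    ∃ x : APsub S l, ∀ i, (x : Fin (l + 1) → S) i ∈ A := by
  obtain ⟨F, hF⟩ := hA
  obtain ⟨y, -⟩ := Ultrafilter.nonempty_of_mem (univ_mem : univ ∈ q)
  choose t ht htA using fun n => hF (itAdd n y)
  -- van der Waerden for the colouring `n ↦ t n` of `ℕ`; `itAdd n y` is `(n + 1) • y`.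
  obtain ⟨a, ha, b, c, hc⟩ := Combinatorics.exists_mono_homothetic_copy (Finset.range (l + 1))
    fun n => (⟨t n, ht n⟩ : F)
  let n : Fin (l + 1) → ℕ := fun i => a * i + b
  have htn : ∀ i, t (n i) = c := fun i =>
    congrArg Subtype.val (hc i (Finset.mem_range.2 i.isLt))
  obtain ⟨z, hz⟩ := Ultrafilter.nonempty_of_mem (iInter_mem.2 fun i => htA (n i))
  refine ⟨⟨fun i => c + itAdd (n i) y + z, _, itAdd (a - 1) y, rfl, fun i => ?_⟩,
    fun i => ?_⟩
  · have hn : n i.succ = n i.castSucc + (a - 1) + 1 := by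
      simp only [n, Fin.val_succ, Fin.val_castSucc]
      rw [Nat.mul_succ]
      omega
    simp only [hn, itAdd_add]
    ac_rfl
  · simpa [htn] using mem_iInter.1 hz i

theorem stmt_11_general {S : Type*} [AddCommSemigroup S]
    (M : Set S) (hM : PiecewiseSyndetic M) (l : ℕ) :
    PiecewiseSyndetic
      {x : APsub S l | ∀ i : Fin (l + 1), (x : Fin (l + 1) → S) i ∈ M} := by
  obtain ⟨L, hL, p, hpL, hMp⟩ := hM.exists_mem_isMinimalLeftIdealIn
  let π : Fin (l + 1) → APsub S l →ₙ+ S := fun i =>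
    { toFun := fun x => (x : Fin (l + 1) → S) i, map_add' := fun _ _ => rfl }
  obtain ⟨q₀, hq₀⟩ := Ultrafilter.exists_map_eval_eq (fun x : APsub S l => (x : Fin (l + 1) → S))
    fun A hA => (hL.syndetic_setOf_mem hpL hA).exists_apsub_forall_mem l
  obtain ⟨LP, hLP, q, hqLP, hq⟩ := hL.exists_lift π hpL fun i => hq₀ i
  refine hLP.piecewiseSyndetic_of_mem hqLP ?_
  have hMq : ∀ i, π i ⁻¹' M ∈ q := fun i => by
    rw [← Ultrafilter.mem_map, hq i]
    exact hMp
  exact mem_of_superset (iInter_mem.2 hMq) fun x hx i => mem_iInter.1 hx i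

theorem stmt_11 {S : Type*} [AddCommSemigroup S] [Countable S]
    (hS : ∀ d : ℕ, 0 < d → PiecewiseSyndetic {x : S | ∃ s : S, x = itAdd (d - 1) s})
    (M : Set S) (hM : PiecewiseSyndetic M) (l : ℕ) :
    PiecewiseSyndetic
      {x : APsub S l | ∀ i : Fin (l + 1), (x : Fin (l + 1) → S) i ∈ M} :=
  stmt_11_general M hM l
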